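/- Let R be a commutative Noetherian ring and a ⊆ R an ideal. If U is an acyclic (everywhere exact) complex of injective R-modules, then the complex Γ_a(U), obtained by applying the a-torsion functor degreewise, is again an acyclic complex of injective R-modules. -/

import Mathlib

open CategoryTheory CategoryTheory.Limits

universe u

variable (R : Type u) [CommRing R]

/-- The `a`-torsion submodule `Γ_a(M) = {x ∈ M | aⁿ x = 0 for some n}`. -/
def aTorsion (a : Ideal R) (M : Type u) [AddCommGroup M] [Module R M] : Submodule R M where
  carrier := {x | ∃ n : ℕ, ∀ r ∈ a ^ n, r • x = 0}
  zero_mem' := ⟨0, fun r _ => smul_zero r⟩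
  add_mem' := by
    intro x y hx hy
    obtain ⟨n, hn⟩ := hx
    obtain ⟨m, hm⟩ := hy
    exact ⟨n + m, fun r hr => by
      rw [smul_add, hn r (Ideal.pow_le_pow_right (Nat.le_add_right n m) hr),
        hm r (Ideal.pow_le_pow_right (Nat.le_add_left m n) hr), add_zero]⟩
  smul_mem' := by
    intro c x hx
    obtain ⟨n, hn⟩ := hx
    exact ⟨n, fun r hr => by rw [smul_comm, hn r hr, smul_zero]⟩

/-- Functoriality of the `a`-torsion submodule. -/
def aTorsionMap (a : Ideal R) {M N : Type u} [AddCommGroup M] [Module R M]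
    [AddCommGroup N] [Module R N] (f : M →ₗ[R] N) :
    aTorsion R a M →ₗ[R] aTorsion R a N :=
  f.restrict (p := aTorsion R a M) (q := aTorsion R a N) (fun x hx => by
    obtain ⟨n, hn⟩ := hx
    exact ⟨n, fun r hr => by rw [← map_smul, hn r hr, map_zero]⟩)

/-- The `a`-torsion functor `Γ_a : Mod R → Mod R`. -/
def torsionFunctor (a : Ideal R) : ModuleCat.{u} R ⥤ ModuleCat.{u} R where
  obj M := ModuleCat.of R (aTorsion R a M)
  map f := ModuleCat.ofHom (aTorsionMap R a f.hom)
  map_id := by intros; ext; rfl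
  map_comp := by intros; ext; rfl

instance (a : Ideal R) : (torsionFunctor R a).Additive where
  map_add := by intros; ext x; apply Subtype.ext; rfl

/-- The `a`-torsion functor applied degreewise to a cochain complex. -/
def torsionCpx (a : Ideal R) (U : CochainComplex (ModuleCat.{u} R) ℤ) :
    CochainComplex (ModuleCat.{u} R) ℤ :=
  ((torsionFunctor R a).mapHomologicalComplex (ComplexShape.up ℤ)).obj U


/-- A totally acyclic complex of injective modules. -/
structure IsTotallyAcyclicInjCpx (U : CochainComplex (ModuleCat.{u} R) ℤ) : Prop where
  inj : ∀ i : ℤ, Injective (U.X i)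
  acyclic : ∀ i : ℤ, U.ExactAt i
  hom_acyclic : ∀ (J : ModuleCat.{u} R), Injective J → ∀ (i : ℤ) (g : J ⟶ U.X i),
    g ≫ U.d i (i + 1) = 0 → ∃ h : J ⟶ U.X (i - 1), h ≫ U.d (i - 1) i = g

/-- `ι : M ⟶ I.X 0` is an injective resolution of `M` (with `I` a ℤ-indexed cochain
complex vanishing in negative degrees). -/
structure IsInjRes (M : ModuleCat.{u} R) (I : CochainComplex (ModuleCat.{u} R) ℤ)
    (ι : M ⟶ I.X 0) : Prop where
  inj : ∀ i : ℤ, Injective (I.X i)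
  zero_neg : ∀ i < (0 : ℤ), IsZero (I.X i)
  mono : Function.Injective ι
  exact_zero : LinearMap.range ι.hom = LinearMap.ker (I.d 0 1).hom
  exact_pos : ∀ i > (0 : ℤ), I.ExactAt i

/-- A complete injective resolution of `M`. -/
structure IsCompleteInjRes (M : ModuleCat.{u} R) (I U : CochainComplex (ModuleCat.{u} R) ℤ)
    (ι : M ⟶ I.X 0) (ν : I ⟶ U) : Prop where
  res : IsInjRes R M I ι
  totAcyclic : IsTotallyAcyclicInjCpx R U
  iso_ge : ∃ n : ℤ, ∀ i ≥ n, IsIso (ν.f i)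

/-- A complex is minimal if every self homotopy equivalence is an isomorphism. -/
def IsMinimalCpx (C : CochainComplex (ModuleCat.{u} R) ℤ) : Prop :=
  ∀ e : HomotopyEquiv C C, IsIso e.hom

/-- The data of a minimal complete injective resolution of `M`. -/
structure MinCIR (M : ModuleCat.{u} R) where
  I : CochainComplex (ModuleCat.{u} R) ℤ
  U : CochainComplex (ModuleCat.{u} R) ℤ
  ι : M ⟶ I.X 0
  ν : I ⟶ U
  complete : IsCompleteInjRes R M I U ι ν
  minI : IsMinimalCpx R I
  minU : IsMinimalCpx R U

/-- The stable local cohomology module `Γ^stab_a(M) = Z⁰(Γ_a(U))` computed from a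
totally acyclic complex `U` (the complete injective resolution of `M`). -/
def stabLC (a : Ideal R) (U : CochainComplex (ModuleCat.{u} R) ℤ) : ModuleCat.{u} R :=
  ModuleCat.of R (LinearMap.ker ((torsionCpx R a U).d 0 1).hom)

/-- A Gorenstein injective module: a cycle of a totally acyclic complex of injectives. -/
def GorensteinInjective (G : ModuleCat.{u} R) : Prop :=
  ∃ U : CochainComplex (ModuleCat.{u} R) ℤ, IsTotallyAcyclicInjCpx R U ∧
    Nonempty (G ≃ₗ[R] LinearMap.ker (U.d 0 1).hom)

/-- Isomorphism in the stable category of Gorenstein injective modules: `X ⊕ J₁ ≅ Y ⊕ J₂`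
for some injective modules `J₁`, `J₂`. -/
def StablyIsomorphic (X Y : ModuleCat.{u} R) : Prop :=
  ∃ J₁ J₂ : ModuleCat.{u} R, Injective J₁ ∧ Injective J₂ ∧
    Nonempty ((X × J₁) ≃ₗ[R] (Y × J₂))

/-- `M` has injective dimension at most `n`. -/
def InjDimLE (M : ModuleCat.{u} R) (n : ℕ) : Prop :=
  ∃ (I : CochainComplex (ModuleCat.{u} R) ℤ) (ι : M ⟶ I.X 0),
    IsInjRes R M I ι ∧ ∀ i : ℤ, i > (n : ℤ) → IsZero (I.X i)

/-- `M` has finite injective dimension. -/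
def FiniteInjDim (M : ModuleCat.{u} R) : Prop := ∃ n : ℕ, InjDimLE R M n

/-- A Gorenstein ring: commutative Noetherian and every localization at a prime has finite
self-injective dimension. -/
def IsGorensteinRing : Prop :=
  IsNoetherianRing R ∧ ∀ (p : Ideal R) (hp : p.IsPrime),
    haveI := hp
    FiniteInjDim (Localization.AtPrime p)
      (ModuleCat.of (Localization.AtPrime p) (Localization.AtPrime p))

/-! `Γ_a` preserves injectives by Baer's criterion: a map from an ideal `I` into `Γ_a(J)` has
finitely generated image, so it is killed by some `aⁿ`; by Artin–Rees it then vanishes on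
`aᵐ ⊓ I`, hence extends over `R ⧸ aᵐ`, and anything in the image of `R ⧸ aᵐ` is `a`-torsion.

Exactness goes by induction on a finite generating set of `a`, passing from `b` to `(x) ⊔ b`.
A cycle `z` of `Γ_{(x) ⊔ b}(U)` with `xⁿ z = 0` has a preimage `w₀` in `Γ_b(U)`; then `xⁿ w₀` is
a cycle, so `xⁿ w₀ = d u` with `u` in `Γ_b(U)`. The annihilators of the powers `x ^ j` stabilise
at some `N`, so in the injective module `Γ_b(U^{i-1})` we can solve `x ^ (N + n) v = x ^ N u`,
and the corrected preimage `w₀ - d v` is killed by `x ^ (N + n)`. -/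

section Torsion

variable {R : Type u} [CommRing R] {M N : Type u} [AddCommGroup M] [Module R M]
  [AddCommGroup N] [Module R N]

theorem aTorsion_bot : aTorsion R ⊥ M = ⊤ :=
  eq_top_iff.mpr fun x _ => ⟨1, fun r hr => by
    rw [pow_one, Ideal.mem_bot] at hr
    rw [hr, zero_smul]⟩

theorem mem_aTorsion_span_singleton {x : R} {m : M} :
    m ∈ aTorsion R (Ideal.span {x}) M ↔ ∃ n : ℕ, x ^ n • m = 0 := by
  refine ⟨fun ⟨n, hn⟩ => ⟨n, hn _ (Ideal.pow_mem_pow (Ideal.mem_span_singleton_self x) n)⟩,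
    fun ⟨n, hn⟩ => ⟨n, fun r hr => ?_⟩⟩
  rw [Ideal.span_singleton_pow, Ideal.mem_span_singleton] at hr
  obtain ⟨t, rfl⟩ := hr
  rw [mul_comm, mul_smul, hn, smul_zero]

theorem aTorsion_antitone : Antitone fun a : Ideal R => aTorsion R a M :=
  fun _ _ hab _ ⟨n, hn⟩ => ⟨n, fun r hr => hn r (Ideal.pow_right_mono hab n hr)⟩

theorem aTorsion_sup (a b : Ideal R) :
    aTorsion R (a ⊔ b) M = aTorsion R a M ⊓ aTorsion R b M := by
  refine le_antisymm (le_inf (aTorsion_antitone le_sup_left) (aTorsion_antitone le_sup_right)) ?_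
  rintro m ⟨⟨n, hn⟩, ⟨k, hk⟩⟩
  refine ⟨n + k, fun r hr => ?_⟩
  obtain ⟨r₁, hr₁, r₂, hr₂, rfl⟩ := Submodule.mem_sup.mp (Ideal.sup_pow_add_le_pow_sup_pow hr)
  rw [add_smul, hn r₁ hr₁, hk r₂ hr₂, add_zero]

theorem exists_pow_smul_eq_zero_of_mem_aTorsion [IsNoetherian R M] {a : Ideal R} (g : M →ₗ[R] N)
    (hg : ∀ x, g x ∈ aTorsion R a N) : ∃ n : ℕ, ∀ x, ∀ r ∈ a ^ n, r • g x = 0 := by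
  let S : ℕ →o Submodule R M :=
    ⟨fun n => (Submodule.torsionBySet R N ↑(a ^ n)).comap g, fun n k hnk =>
      Submodule.comap_mono (Submodule.torsionBySet_le_torsionBySet_of_subset
        (Ideal.pow_le_pow_right hnk))⟩
  obtain ⟨n, hn⟩ := monotone_stabilizes_iff_noetherian.mpr inferInstance S
  refine ⟨n, fun x => ?_⟩
  obtain ⟨k, hk⟩ := hg x
  have hx : x ∈ S (max n k) := (Submodule.mem_torsionBySet_iff _ _).mpr fun r =>
    hk r (Ideal.pow_le_pow_right (le_max_right n k) r.2)
  rw [← hn _ (le_max_left n k)] at hx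
  exact fun r hr => (Submodule.mem_torsionBySet_iff _ _).mp hx ⟨r, hr⟩

theorem Ideal.exists_pow_inf_le_pow_smul [IsNoetherianRing R] (a I : Ideal R) (n : ℕ) :
    ∃ m : ℕ, a ^ m ⊓ I ≤ a ^ n • I := by
  obtain ⟨k, hk⟩ := Ideal.exists_pow_inf_eq_pow_smul a I
  refine ⟨n + k, ?_⟩
  have := hk (n + k) (Nat.le_add_left k n)
  simp only [smul_eq_mul, Ideal.mul_top, Nat.add_sub_cancel] at this
  rw [this]
  exact Ideal.mul_mono_right inf_le_right

theorem apply_eq_zero_of_mem_smul {I : Submodule R M} {b : Ideal R} (g : I →ₗ[R] N)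
    (hg : ∀ x, ∀ r ∈ b, r • g x = 0) {x : I} (hx : (x : M) ∈ b • I) : g x = 0 := by
  have hle : b • I ≤ (LinearMap.ker g).map I.subtype :=
    Submodule.smul_le.mpr fun r hr z hz => ⟨r • ⟨z, hz⟩,
      by rw [SetLike.mem_coe, LinearMap.mem_ker, map_smul, hg _ r hr], rfl⟩
  obtain ⟨y, hy, hyx⟩ := hle hx
  rwa [← Subtype.ext hyx]

end Torsion

section Baer

variable {R : Type u} [CommRing R] {Q : Type u} [AddCommGroup Q] [Module R Q]

theorem Module.Baer.exists_comp_eq_of_ker_le (hQ : Module.Baer R Q) {M N : Type*}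
    [AddCommGroup M] [Module R M] [AddCommGroup N] [Module R N] (f : M →ₗ[R] N) (g : M →ₗ[R] Q)
    (hfg : LinearMap.ker f ≤ LinearMap.ker g) : ∃ h : N →ₗ[R] Q, h ∘ₗ f = g := by
  obtain ⟨h, hh⟩ := hQ.extension_property ((LinearMap.ker f).liftQ f le_rfl)
    (LinearMap.ker_eq_bot.mp (Submodule.ker_liftQ_eq_bot _ _ _ le_rfl))
    ((LinearMap.ker f).liftQ g hfg)
  exact ⟨h, by rw [← Submodule.liftQ_mkQ _ f le_rfl, ← LinearMap.comp_assoc, hh,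
    Submodule.liftQ_mkQ]⟩

theorem Module.Baer.exists_smul_eq_smul (hQ : Module.Baer R Q) (u : Q) {y c : R}
    (h : ∀ r, r * y = 0 → r * c = 0) : ∃ v : Q, y • v = c • u := by
  obtain ⟨φ, hφ⟩ := hQ.exists_comp_eq_of_ker_le (LinearMap.toSpanSingleton R R y)
    (LinearMap.toSpanSingleton R Q (c • u)) fun r hr => by
      simp only [LinearMap.mem_ker, LinearMap.toSpanSingleton_apply, smul_eq_mul] at hr ⊢
      rw [← smul_assoc, smul_eq_mul, h r hr, zero_smul]
  refine ⟨φ 1, ?_⟩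
  have := LinearMap.congr_fun hφ 1
  simp only [LinearMap.comp_apply, LinearMap.toSpanSingleton_apply, one_smul] at this
  rw [← this, ← map_smul, smul_eq_mul, mul_one]

theorem baer_aTorsion [IsNoetherianRing R] (a : Ideal R) (hQ : Module.Baer R Q) :
    Module.Baer R (aTorsion R a Q) := by
  intro I g
  let g' := (aTorsion R a Q).subtype ∘ₗ g
  obtain ⟨n, hn⟩ := exists_pow_smul_eq_zero_of_mem_aTorsion g' fun x => (g x).2
  obtain ⟨m, hm⟩ := Ideal.exists_pow_inf_le_pow_smul a I n
  obtain ⟨φ, hφ⟩ := hQ.exists_comp_eq_of_ker_le ((a ^ m).mkQ ∘ₗ I.subtype) g' fun x hx =>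
    apply_eq_zero_of_mem_smul g' hn (hm ⟨(Submodule.Quotient.mk_eq_zero _).mp hx, x.2⟩)
  have hφa : ∀ z, φ z ∈ aTorsion R a Q := fun z => ⟨m, fun r hr => by
    rw [← map_smul, (Module.mem_annihilator.mp (Ideal.annihilator_quotient.ge hr)) z, map_zero]⟩
  exact ⟨φ.codRestrict _ hφa ∘ₗ (a ^ m).mkQ, fun x hx =>
    Subtype.ext (LinearMap.congr_fun hφ ⟨x, hx⟩)⟩

end Baer

theorem exists_pow_mul_eq_zero_of_pow_mul_eq_zero {R : Type*} [CommRing R] [IsNoetherianRing R]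
    (x : R) : ∃ N : ℕ, ∀ (j : ℕ) (r : R), r * x ^ j = 0 → r * x ^ N = 0 := by
  obtain ⟨N, hN⟩ := Filter.eventually_atTop.mp (LinearMap.mulRight R x).eventually_iSup_ker_pow_eq
  refine ⟨N, fun j r hr => ?_⟩
  have hmem : r ∈ ⨆ k, LinearMap.ker (LinearMap.mulRight R x ^ k) :=
    Submodule.mem_iSup_of_mem j (by simpa [LinearMap.pow_mulRight] using hr)
  rw [hN N le_rfl] at hmem
  simpa [LinearMap.pow_mulRight] using hmem

section Complexes

variable {R : Type u} [CommRing R]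

theorem baer_of_injective {J : ModuleCat.{u} R} (hJ : Injective J) : Module.Baer R J :=
  Module.Baer.of_injective (Module.injective_module_of_injective_object R J (inj := hJ))

theorem injective_torsionFunctor_obj [IsNoetherianRing R] (a : Ideal R) {J : ModuleCat.{u} R}
    (hJ : Injective J) : Injective ((torsionFunctor R a).obj J) :=
  Module.injective_object_of_injective_module R _
    (inj := (baer_aTorsion a (baer_of_injective hJ)).injective)

theorem CochainComplex.exactAt_iff_moduleCat {C : CochainComplex (ModuleCat.{u} R) ℤ} {i j : ℤ}
    (hij : i + 1 = j) :
    C.ExactAt j ↔ ∀ z : C.X j, C.d j (j + 1) z = 0 → ∃ w : C.X i, C.d i j w = z := by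
  rw [HomologicalComplex.exactAt_iff' C i j (j + 1) ((ComplexShape.up ℤ).prev_eq' hij)
    ((ComplexShape.up ℤ).next_eq' rfl), ShortComplex.moduleCat_exact_iff]
  rfl

variable {U : CochainComplex (ModuleCat.{u} R) ℤ}

theorem torsionCpx_exactAt_iff {b : Ideal R} {i j : ℤ} (hij : i + 1 = j) :
    (torsionCpx R b U).ExactAt j ↔ ∀ z ∈ aTorsion R b (U.X j), U.d j (j + 1) z = 0 →
      ∃ w ∈ aTorsion R b (U.X i), U.d i j w = z := by
  rw [CochainComplex.exactAt_iff_moduleCat hij]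
  refine ⟨fun h z hz hdz => ?_, fun h z hdz => ?_⟩
  · obtain ⟨w, hw⟩ := h ⟨z, hz⟩ (Subtype.ext hdz)
    exact ⟨Subtype.val w, w.2, congrArg Subtype.val hw⟩
  · obtain ⟨w, hw, hwz⟩ := h (Subtype.val z) z.2 (congrArg Subtype.val hdz)
    exact ⟨⟨w, hw⟩, Subtype.ext hwz⟩

theorem torsionCpx_bot_exactAt {j : ℤ} (hU : U.ExactAt j) : (torsionCpx R ⊥ U).ExactAt j := by
  rw [torsionCpx_exactAt_iff (sub_add_cancel j 1)]
  rw [CochainComplex.exactAt_iff_moduleCat (sub_add_cancel j 1)] at hU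
  intro z _ hdz
  obtain ⟨w, hw⟩ := hU z hdz
  exact ⟨w, by simp [aTorsion_bot], hw⟩

theorem torsionCpx_sup_span_singleton_exactAt [IsNoetherianRing R]
    (hinj : ∀ i, Injective (U.X i)) (x : R) {b : Ideal R}
    (hb : ∀ j, (torsionCpx R b U).ExactAt j) (j : ℤ) :
    (torsionCpx R (Ideal.span {x} ⊔ b) U).ExactAt j := by
  obtain ⟨i, rfl⟩ : ∃ i, j = i + 1 := ⟨j - 1, by ring⟩
  have hb' {k l : ℤ} (hkl : k + 1 = l) := (torsionCpx_exactAt_iff hkl).mp (hb l)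
  rw [torsionCpx_exactAt_iff rfl]
  intro z hz hdz
  obtain ⟨hzx, hzb⟩ := (aTorsion_sup _ _).le hz
  obtain ⟨n, hxz⟩ := mem_aTorsion_span_singleton.mp hzx
  obtain ⟨w₀, hw₀, hdw₀⟩ := hb' rfl z hzb hdz
  obtain ⟨u, hu, hdu⟩ := hb' (sub_add_cancel i 1) (x ^ n • w₀) (Submodule.smul_mem _ _ hw₀)
    (by rw [map_smul, hdw₀, hxz])
  obtain ⟨N, hN⟩ := exists_pow_mul_eq_zero_of_pow_mul_eq_zero x
  obtain ⟨v, hv⟩ := (baer_aTorsion b (baer_of_injective (hinj (i - 1)))).exists_smul_eq_smul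
    ⟨u, hu⟩ (hN (N + n))
  have hv' : x ^ (N + n) • (v : U.X (i - 1)) = x ^ N • u := congrArg Subtype.val hv
  refine ⟨w₀ - U.d (i - 1) i v, (aTorsion_sup _ _).ge ⟨?_, ?_⟩, ?_⟩
  · refine mem_aTorsion_span_singleton.mpr ⟨N + n, ?_⟩
    rw [smul_sub, ← map_smul, hv', map_smul, hdu, smul_smul, ← pow_add, sub_self]
  · exact Submodule.sub_mem _ hw₀ (aTorsionMap R b (U.d (i - 1) i).hom v).2
  · rw [map_sub, hdw₀, ← ModuleCat.comp_apply, U.d_comp_d]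
    simp

theorem torsionCpx_span_exactAt [IsNoetherianRing R] (hinj : ∀ i, Injective (U.X i))
    (hac : ∀ i, U.ExactAt i) (s : Finset R) (j : ℤ) :
    (torsionCpx R (Ideal.span s) U).ExactAt j := by
  classical
  induction s using Finset.induction_on generalizing j with
  | empty => simpa using torsionCpx_bot_exactAt (hac j)
  | insert x s _ ih =>
    rw [Finset.coe_insert, Ideal.span_insert]
    exact torsionCpx_sup_span_singleton_exactAt hinj x ih j

end Complexes

/-- Over a commutative Noetherian ring, applying the `a`-torsion functor
degreewise to an acyclic complex of injective modules yields again an acyclic complex of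
injective modules. -/
theorem torsionCpx_of_acyclic_injectives (R : Type u) [CommRing R] [IsNoetherianRing R]
    (a : Ideal R) (U : CochainComplex (ModuleCat.{u} R) ℤ)
    (hinj : ∀ i : ℤ, Injective (U.X i)) (hac : ∀ i : ℤ, U.ExactAt i) :
    (∀ i : ℤ, Injective ((torsionCpx R a U).X i)) ∧ (∀ i : ℤ, (torsionCpx R a U).ExactAt i) := by
  obtain ⟨s, rfl⟩ : a.FG := IsNoetherian.noetherian a
  exact ⟨fun i => injective_torsionFunctor_obj _ (hinj i), torsionCpx_span_exactAt hinj hac s⟩
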